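/- Let G₁, G₂, G₃ be groups with automatic structures L₁ ⊆ A₁*, L₂ ⊆ A₂*, L₃ ⊆ A₃* for surjective monoid homomorphisms π₁, π₂, π₃ respectively, and let φ₁ : G₁ → G₂ and φ₂ : G₂ → G₃ be group homomorphisms. If the BRP holds for (φ₁, L₁, L₂) and for (φ₂, L₂, L₃), then the BRP holds for (φ₁φ₂, L₁, L₃); the same implication holds with the BRP replaced throughout by the synchronous BRP, and with the BRP replaced throughout by the FT-BRP. -/

import Mathlib

open scoped NNReal

namespace Auto

/-- The generating set `Aπ ∪ (Aπ)⁻¹` of `G` determined by `π : A* → G`. -/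
def gens {A G : Type*} [Group G] (π : FreeMonoid A →* G) : Set G :=
  (Set.range fun a : A => π (FreeMonoid.of a)) ∪
    Set.range fun a : A => (π (FreeMonoid.of a))⁻¹

/-- The word metric `d_A` on `G`: the least `n` such that `g⁻¹h` is a product of `n`
elements of `Aπ ∪ (Aπ)⁻¹`. -/
noncomputable def wdist {A G : Type*} [Group G] (π : FreeMonoid A →* G) (g h : G) : ℕ :=
  sInf {n : ℕ | ∃ l : List G, l.length = n ∧ (∀ x ∈ l, x ∈ gens π) ∧ l.prod = g⁻¹ * h}

/-- Evaluation of a word of `A*` in `G`. -/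
def evalW {A G : Type*} [Group G] (π : FreeMonoid A →* G) (w : List A) : G :=
  π (FreeMonoid.ofList w)

/-- `u` and `v` `p`-fellow travel: `d_A(u^[n]π, v^[n]π) ≤ p` for all `n`. -/
def FellowTravel {A G : Type*} [Group G] (π : FreeMonoid A →* G) (p : ℝ≥0)
    (u v : List A) : Prop :=
  ∀ n : ℕ, (wdist π (evalW π (u.take n)) (evalW π (v.take n)) : ℝ≥0) ≤ p

/-- `u` and `v` are `p`-meeting-fellow-travellers. -/
def MFT {A G : Type*} [Group G] (π : FreeMonoid A →* G) (p : ℝ≥0) (u v : List A) : Prop :=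
  FellowTravel π p u v ∧ evalW π u = evalW π v

/-- A language is regular if it is accepted by a finite-state automaton. -/
def IsRegular {A : Type*} (L : Language A) : Prop :=
  ∃ (σ : Type) (_ : Fintype σ) (M : DFA A σ), M.accepts = L

/-- `L` is an automatic structure for `π`. -/
structure IsAutomaticStructure {A G : Type*} [Group G] (π : FreeMonoid A →* G)
    (L : Language A) : Prop where
  regular : IsRegular L
  onto : ∀ g : G, ∃ w ∈ L, evalW π w = g
  ft : ∃ N : ℕ, ∀ u ∈ L, ∀ v ∈ L,
    wdist π (evalW π u) (evalW π v) ≤ 1 → FellowTravel π N u v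

/-- Evaluation of an element of `A ∪ {ε}`. -/
def evalOpt {A G : Type*} [Group G] (π : FreeMonoid A →* G) : Option A → G
  | none => 1
  | some a => π (FreeMonoid.of a)

/-- `L` is a biautomatic structure for `π`. -/
structure IsBiautomaticStructure {A G : Type*} [Group G] (π : FreeMonoid A →* G)
    (L : Language A) extends IsAutomaticStructure π L : Prop where
  bi : ∃ N : ℕ, ∀ u ∈ L, ∀ v ∈ L, ∀ a : Option A,
    evalW π v = evalOpt π a * evalW π u →
    ∀ n : ℕ, wdist π (evalOpt π a * evalW π (u.take n)) (evalW π (v.take n)) ≤ N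

/-- A language is factorial if it is closed under taking factors. -/
def IsFactorial {A : Type*} (L : Language A) : Prop :=
  ∀ u ∈ L, ∀ v : List A, v <:+: u → v ∈ L

/-- `D : ℝ≥0 → ℝ≥0` is a departure function for `(G, L)`. -/
def IsDepartureFunction {A G : Type*} [Group G] (π : FreeMonoid A →* G) (L : Language A)
    (D : ℝ≥0 → ℝ≥0) : Prop :=
  ∀ w ∈ L, ∀ r : ℝ≥0, ∀ s t : ℕ, D r ≤ (t : ℝ≥0) → s + t ≤ w.length →
    r < (wdist π (evalW π (w.take s)) (evalW π (w.take (s + t))) : ℝ≥0)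

/-- Every point of `S` is within distance `N` of `T`. -/
def NbhdIn {A G : Type*} [Group G] (π : FreeMonoid A →* G) (N : ℕ) (S T : Set G) : Prop :=
  ∀ s ∈ S, ∃ t ∈ T, wdist π s t ≤ N

/-- The Hausdorff distance between `S` and `T` is at most `N`. -/
def HausdorffLE {A G : Type*} [Group G] (π : FreeMonoid A →* G) (N : ℕ)
    (S T : Set G) : Prop :=
  NbhdIn π N S T ∧ NbhdIn π N T S

/-- `H` is an `L`-quasiconvex subgroup of `G`. -/
def IsQuasiconvex {A G : Type*} [Group G] (π : FreeMonoid A →* G) (L : Language A)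
    (H : Subgroup G) : Prop :=
  ∃ k : ℕ, ∀ h ∈ H, ∀ h' ∈ H, ∀ w ∈ L, h * evalW π w = h' →
    ∀ n : ℕ, ∃ z ∈ H, wdist π (h * evalW π (w.take n)) z ≤ k

/-- The bounded reduction property for `(φ, L, L')`. -/
def BRP {A B G G' : Type*} [Group G] [Group G'] (π : FreeMonoid A →* G)
    (π' : FreeMonoid B →* G') (φ : G →* G') (L : Language A) (L' : Language B) : Prop :=
  ∃ N : ℕ, ∀ x : G, ∀ α ∈ L, ∀ β ∈ L', evalW π' β = φ (evalW π α) →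
    HausdorffLE π' N (Set.range fun n : ℕ => φ (x * evalW π (α.take n)))
      (Set.range fun n : ℕ => φ x * evalW π' (β.take n))

/-- The synchronous bounded reduction property for `(φ, L, L')`. -/
def SyncBRP {A B G G' : Type*} [Group G] [Group G'] (π : FreeMonoid A →* G)
    (π' : FreeMonoid B →* G') (φ : G →* G') (L : Language A) (L' : Language B) : Prop :=
  ∃ N : ℕ, ∀ x : G, ∀ α ∈ L, ∀ β ∈ L', evalW π' β = φ (evalW π α) →
    ∀ n : ℕ, wdist π' (φ (x * evalW π (α.take n))) (φ x * evalW π' (β.take n)) ≤ N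

/-- The fellow traveller bounded reduction property (FT-BRP) for `(φ, L, L')`. -/
def FTBRP {A B G G' : Type*} [Group G] [Group G'] (π : FreeMonoid A →* G)
    (π' : FreeMonoid B →* G') (φ : G →* G') (L : Language A) (L' : Language B) : Prop :=
  ∀ p : ℝ≥0, ∃ q : ℝ≥0,
    ∀ u₁ ∈ L, ∀ u₂ ∈ L, ∀ u₃ ∈ L, ∀ u₁' ∈ L', ∀ u₂' ∈ L', ∀ u₃' ∈ L',
      evalW π' u₁' = φ (evalW π u₁) → evalW π' u₂' = φ (evalW π u₂) →
        evalW π' u₃' = φ (evalW π u₃) →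
          MFT π p (u₁ ++ u₂) u₃ → MFT π' q (u₁' ++ u₂') u₃'

/-- The natural homomorphism `(A ⊔ B)* → G` agreeing with `π₁` on `A` and `π₂` on `B`. -/
def sumHom {A B G : Type*} [Group G] (π₁ : FreeMonoid A →* G) (π₂ : FreeMonoid B →* G) :
    FreeMonoid (A ⊕ B) →* G :=
  FreeMonoid.lift (Sum.elim (fun a => π₁ (FreeMonoid.of a)) fun b => π₂ (FreeMonoid.of b))

/-- The union `L₁ ∪ L₂` viewed as a language over `A ⊔ B`. -/
def unionLang {A B : Type*} (L₁ : Language A) (L₂ : Language B) : Language (A ⊕ B) :=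
  {w : List (A ⊕ B) | (∃ u ∈ L₁, w = u.map Sum.inl) ∨ ∃ v ∈ L₂, w = v.map Sum.inr}

/-- `L` is an asynchronous automatic structure for `π`. -/
def IsAsyncAutomaticStructure {A G : Type*} [Group G] (π : FreeMonoid A →* G)
    (L : Language A) : Prop :=
  IsRegular L ∧ (∀ g : G, ∃ w ∈ L, evalW π w = g) ∧
    ∃ p : ℕ, ∀ u ∈ L, ∀ v ∈ L, wdist π (evalW π u) (evalW π v) ≤ 1 →
      ∃ φ ψ : ℕ → ℕ, Monotone φ ∧ Monotone ψ ∧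
        Function.Surjective φ ∧ Function.Surjective ψ ∧
          ∀ t : ℕ, wdist π (evalW π (u.take (φ t))) (evalW π (v.take (ψ t))) ≤ p

/-- `L₁` and `L₂` are equivalent automatic structures. -/
def LangEquivalent {A B G : Type*} [Group G] (π₁ : FreeMonoid A →* G)
    (π₂ : FreeMonoid B →* G) (L₁ : Language A) (L₂ : Language B) : Prop :=
  IsAsyncAutomaticStructure (sumHom π₁ π₂) (unionLang L₁ L₂)

/-- `L₁` and `L₂` are synchronously equivalent automatic structures. -/
def LangSyncEquivalent {A B G : Type*} [Group G] (π₁ : FreeMonoid A →* G)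
    (π₂ : FreeMonoid B →* G) (L₁ : Language A) (L₂ : Language B) : Prop :=
  IsAutomaticStructure (sumHom π₁ π₂) (unionLang L₁ L₂)

/-- `L` has the Hausdorff closeness property. -/
def HausClose {A G : Type*} [Group G] (π : FreeMonoid A →* G) (L : Language A) : Prop :=
  ∃ N : ℕ, ∀ u ∈ L, ∀ v ∈ L, wdist π (evalW π u) (evalW π v) ≤ 1 →
    HausdorffLE π N (Set.range fun n : ℕ => evalW π (u.take n))
      (Set.range fun n : ℕ => evalW π (v.take n))

/-- The padded alphabet `C = (A×B) ∪ (A×{$}) ∪ ({$}×B)` of convolution. -/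
abbrev ConvAlphabet (A B : Type*) := (A × B) ⊕ (A ⊕ B)

/-- The convolution `u ⋄ v` of two words. -/
def conv {A B : Type*} : List A → List B → List (ConvAlphabet A B)
  | [], [] => []
  | [], b :: v => Sum.inr (Sum.inr b) :: conv [] v
  | a :: u, [] => Sum.inr (Sum.inl a) :: conv u []
  | a :: u, b :: v => Sum.inl (a, b) :: conv u v
  termination_by u v => u.length + v.length

/-- The convolution `L₁ ⋄ L₂` of two languages. -/
def convLang {A B : Type*} (L₁ : Language A) (L₂ : Language B) :
    Language (ConvAlphabet A B) :=
  {w : List (ConvAlphabet A B) | ∃ u ∈ L₁, ∃ v ∈ L₂, w = conv u v}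

/-- The natural homomorphism `C* → G × G'` for the convolution alphabet. -/
def convHom {A B G G' : Type*} [Group G] [Group G'] (π₁ : FreeMonoid A →* G)
    (π₂ : FreeMonoid B →* G') : FreeMonoid (ConvAlphabet A B) →* G × G' :=
  FreeMonoid.lift fun c =>
    match c with
    | Sum.inl (a, b) => (π₁ (FreeMonoid.of a), π₂ (FreeMonoid.of b))
    | Sum.inr (Sum.inl a) => (π₁ (FreeMonoid.of a), 1)
    | Sum.inr (Sum.inr b) => (1, π₂ (FreeMonoid.of b))

/-- A group is automatic if it admits an automatic structure over some finite alphabet. -/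
def IsAutomaticGroup (G : Type*) [Group G] : Prop :=
  ∃ (A : Type) (_ : Fintype A) (π : FreeMonoid A →* G) (L : Language A),
    IsAutomaticStructure π L

end Auto

open Auto

/-! Homomorphisms between finitely generated groups are Lipschitz for the word metrics, with
constant the largest length of the image of a generator. For `α ∈ L₁` pick `β ∈ L₂` representing
`(απ₁)φ₁`: applying `φ₂` to the path of `α` lands within `K·N₁` of the image of the path of `β`,
which is within `N₂` of the path of `γ`, so the bounds add up by the triangle inequality. The
FT-BRP composes through such intermediate words of `L₂` without any metric estimate. -/

namespace Auto

section WordMetric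

variable {A G : Type*} [Group G]

lemma surjective_of_forall_exists_evalW {π : FreeMonoid A →* G} {L : Language A}
    (hL : ∀ g : G, ∃ w ∈ L, evalW π w = g) : Function.Surjective π := fun g =>
  let ⟨w, _, hw⟩ := hL g
  ⟨FreeMonoid.ofList w, hw⟩

lemma gens_inv_mem {π : FreeMonoid A →* G} {s : G} (hs : s ∈ gens π) : s⁻¹ ∈ gens π := by
  rcases hs with ⟨a, rfl⟩ | ⟨a, rfl⟩
  · exact Or.inr ⟨a, rfl⟩
  · exact Or.inl ⟨a, (inv_inv _).symm⟩

lemma wdist_le_length (π : FreeMonoid A →* G) {g h : G} {l : List G}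
    (hl : ∀ x ∈ l, x ∈ gens π) (hp : l.prod = g⁻¹ * h) : wdist π g h ≤ l.length :=
  Nat.sInf_le ⟨l, rfl, hl, hp⟩

lemma exists_length_eq_wdist {π : FreeMonoid A →* G} (hπ : Function.Surjective π) (g h : G) :
    ∃ l : List G, l.length = wdist π g h ∧ (∀ x ∈ l, x ∈ gens π) ∧ l.prod = g⁻¹ * h := by
  refine Nat.sInf_mem (s := {n | ∃ l : List G, l.length = n ∧ (∀ x ∈ l, x ∈ gens π) ∧
    l.prod = g⁻¹ * h}) ?_
  obtain ⟨w, hw⟩ := hπ (g⁻¹ * h)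
  refine ⟨_, (FreeMonoid.toList w).map (fun a => π (FreeMonoid.of a)), rfl, ?_, ?_⟩
  · simp only [List.mem_map]
    rintro _ ⟨a, -, rfl⟩
    exact Or.inl ⟨a, rfl⟩
  · rw [← hw, ← FreeMonoid.lift_restrict π, FreeMonoid.lift_apply]
    rfl

lemma wdist_mul_left (π : FreeMonoid A →* G) (a g h : G) :
    wdist π (a * g) (a * h) = wdist π g h := by
  simp only [wdist, mul_inv_rev, mul_assoc, inv_mul_cancel_left]

lemma wdist_eq_wdist_one (π : FreeMonoid A →* G) (g h : G) :
    wdist π g h = wdist π 1 (g⁻¹ * h) := by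
  rw [← wdist_mul_left π g⁻¹, inv_mul_cancel]

variable {π : FreeMonoid A →* G} (hπ : Function.Surjective π)
include hπ

lemma wdist_triangle (g h k : G) : wdist π g k ≤ wdist π g h + wdist π h k := by
  obtain ⟨l₁, hl₁, hg₁, hp₁⟩ := exists_length_eq_wdist hπ g h
  obtain ⟨l₂, hl₂, hg₂, hp₂⟩ := exists_length_eq_wdist hπ h k
  calc wdist π g k ≤ (l₁ ++ l₂).length :=
        wdist_le_length π (fun x hx => (List.mem_append.mp hx).elim (hg₁ x) (hg₂ x))
          (by rw [List.prod_append, hp₁, hp₂]; group)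
    _ = wdist π g h + wdist π h k := by rw [List.length_append, hl₁, hl₂]

lemma wdist_comm (g h : G) : wdist π g h = wdist π h g := by
  suffices key : ∀ g h : G, wdist π h g ≤ wdist π g h from le_antisymm (key h g) (key g h)
  intro g h
  obtain ⟨l, hl, hg, hp⟩ := exists_length_eq_wdist hπ g h
  calc wdist π h g ≤ (l.map Inv.inv).reverse.length := by
        refine wdist_le_length π ?_ ?_
        · simp only [List.mem_reverse, List.mem_map]
          rintro _ ⟨y, hy, rfl⟩
          exact gens_inv_mem (hg y hy)
        · rw [← List.prod_inv_reverse, hp, mul_inv_rev, inv_inv]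
    _ = wdist π g h := by simp [hl]

lemma wdist_one_inv (g : G) : wdist π 1 g⁻¹ = wdist π 1 g := by
  rw [← wdist_mul_left π g, mul_one, mul_inv_cancel, wdist_comm hπ]

lemma wdist_one_prod_le (l : List G) : wdist π 1 l.prod ≤ (l.map (wdist π 1)).sum := by
  induction l with
  | nil => simpa using wdist_le_length π (g := 1) (h := 1) (l := []) (by simp) (by simp)
  | cons x t ih =>
    calc wdist π 1 (x * t.prod) ≤ wdist π 1 x + wdist π x (x * t.prod) := wdist_triangle hπ _ _ _
      _ = wdist π 1 x + wdist π 1 t.prod := by rw [← wdist_mul_left π x 1 t.prod, mul_one]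
      _ ≤ _ := by simpa using ih

end WordMetric

section Lipschitz

variable {A B G G' : Type*} [Group G] [Group G'] {π : FreeMonoid A →* G}
  {π' : FreeMonoid B →* G'}

lemma exists_wdist_map_le [Fintype A] (hπ : Function.Surjective π)
    (hπ' : Function.Surjective π') (φ : G →* G') :
    ∃ K : ℕ, ∀ g h : G, wdist π' (φ g) (φ h) ≤ K * wdist π g h := by
  classical
  set K := Finset.univ.sup fun a : A => wdist π' 1 (φ (π (FreeMonoid.of a)))
  have hK : ∀ s ∈ gens π, wdist π' 1 (φ s) ≤ K := by
    rintro s (⟨a, rfl⟩ | ⟨a, rfl⟩)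
    · exact Finset.le_sup (f := fun a : A => wdist π' 1 (φ (π (FreeMonoid.of a))))
        (Finset.mem_univ a)
    · rw [map_inv, wdist_one_inv hπ']
      exact Finset.le_sup (f := fun a : A => wdist π' 1 (φ (π (FreeMonoid.of a))))
        (Finset.mem_univ a)
  refine ⟨K, fun g h => ?_⟩
  obtain ⟨l, hl, hgens, hprod⟩ := exists_length_eq_wdist hπ g h
  calc wdist π' (φ g) (φ h) = wdist π' 1 (l.map φ).prod := by
        rw [wdist_eq_wdist_one, ← map_list_prod, hprod, map_mul, map_inv]
    _ ≤ ((l.map φ).map (wdist π' 1)).sum := wdist_one_prod_le hπ' _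
    _ ≤ ((l.map φ).map (wdist π' 1)).length • K := by
        refine List.sum_le_card_nsmul _ _ ?_
        simp only [List.map_map, List.mem_map, Function.comp_apply]
        rintro _ ⟨s, hs, rfl⟩
        exact hK s (hgens s hs)
    _ = K * wdist π g h := by simp [hl, mul_comm]

lemma NbhdIn.trans (hπ : Function.Surjective π) {N M : ℕ} {S T U : Set G}
    (hST : NbhdIn π N S T) (hTU : NbhdIn π M T U) : NbhdIn π (N + M) S U := by
  intro s hs
  obtain ⟨t, ht, hst⟩ := hST s hs
  obtain ⟨u, hu, htu⟩ := hTU t ht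
  exact ⟨u, hu, (wdist_triangle hπ s t u).trans (Nat.add_le_add hst htu)⟩

lemma NbhdIn.image {φ : G → G'} {K N : ℕ}
    (hφ : ∀ g h : G, wdist π' (φ g) (φ h) ≤ K * wdist π g h) {S T : Set G}
    (hST : NbhdIn π N S T) : NbhdIn π' (K * N) (φ '' S) (φ '' T) := by
  rintro _ ⟨s, hs, rfl⟩
  obtain ⟨t, ht, hst⟩ := hST s hs
  exact ⟨φ t, Set.mem_image_of_mem φ ht, (hφ s t).trans (Nat.mul_le_mul_left K hst)⟩

lemma HausdorffLE.trans (hπ : Function.Surjective π) {N M : ℕ} {S T U : Set G}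
    (hST : HausdorffLE π N S T) (hTU : HausdorffLE π M T U) : HausdorffLE π (N + M) S U :=
  ⟨hST.1.trans hπ hTU.1, Nat.add_comm N M ▸ hTU.2.trans hπ hST.2⟩

lemma HausdorffLE.image {φ : G → G'} {K N : ℕ}
    (hφ : ∀ g h : G, wdist π' (φ g) (φ h) ≤ K * wdist π g h) {S T : Set G}
    (hST : HausdorffLE π N S T) : HausdorffLE π' (K * N) (φ '' S) (φ '' T) :=
  ⟨hST.1.image hφ, hST.2.image hφ⟩

end Lipschitz

section Composition

variable {A₁ A₂ A₃ G₁ G₂ G₃ : Type*} [Group G₁] [Group G₂] [Group G₃]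
  {π₁ : FreeMonoid A₁ →* G₁} {π₂ : FreeMonoid A₂ →* G₂} {π₃ : FreeMonoid A₃ →* G₃}
  {L₁ : Language A₁} {L₂ : Language A₂} {L₃ : Language A₃} {φ₁ : G₁ →* G₂} {φ₂ : G₂ →* G₃}

theorem BRP.comp [Fintype A₂] (hπ₃ : Function.Surjective π₃)
    (hL₂ : ∀ g : G₂, ∃ w ∈ L₂, evalW π₂ w = g)
    (h₁ : BRP π₁ π₂ φ₁ L₁ L₂) (h₂ : BRP π₂ π₃ φ₂ L₂ L₃) :
    BRP π₁ π₃ (φ₂.comp φ₁) L₁ L₃ := by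
  obtain ⟨K, hK⟩ := exists_wdist_map_le (surjective_of_forall_exists_evalW hL₂) hπ₃ φ₂
  obtain ⟨N₁, hN₁⟩ := h₁
  obtain ⟨N₂, hN₂⟩ := h₂
  refine ⟨K * N₁ + N₂, fun x α hα γ hγ hγα => ?_⟩
  obtain ⟨β, hβ, hβα⟩ := hL₂ (φ₁ (evalW π₁ α))
  have hγβ : evalW π₃ γ = φ₂ (evalW π₂ β) := hβα ▸ hγα
  have hφ₂N₁ := (hN₁ x α hα β hβ hβα).image hK
  rw [← Set.range_comp, ← Set.range_comp] at hφ₂N₁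
  exact hφ₂N₁.trans hπ₃ (hN₂ (φ₁ x) β hβ γ hγ hγβ)

theorem SyncBRP.comp [Fintype A₂] (hπ₃ : Function.Surjective π₃)
    (hL₂ : ∀ g : G₂, ∃ w ∈ L₂, evalW π₂ w = g)
    (h₁ : SyncBRP π₁ π₂ φ₁ L₁ L₂) (h₂ : SyncBRP π₂ π₃ φ₂ L₂ L₃) :
    SyncBRP π₁ π₃ (φ₂.comp φ₁) L₁ L₃ := by
  obtain ⟨K, hK⟩ := exists_wdist_map_le (surjective_of_forall_exists_evalW hL₂) hπ₃ φ₂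
  obtain ⟨N₁, hN₁⟩ := h₁
  obtain ⟨N₂, hN₂⟩ := h₂
  refine ⟨K * N₁ + N₂, fun x α hα γ hγ hγα n => ?_⟩
  obtain ⟨β, hβ, hβα⟩ := hL₂ (φ₁ (evalW π₁ α))
  have hγβ : evalW π₃ γ = φ₂ (evalW π₂ β) := hβα ▸ hγα
  calc wdist π₃ (φ₂ (φ₁ (x * evalW π₁ (α.take n)))) (φ₂ (φ₁ x) * evalW π₃ (γ.take n))
      ≤ wdist π₃ (φ₂ (φ₁ (x * evalW π₁ (α.take n)))) (φ₂ (φ₁ x * evalW π₂ (β.take n))) +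
          wdist π₃ (φ₂ (φ₁ x * evalW π₂ (β.take n))) (φ₂ (φ₁ x) * evalW π₃ (γ.take n)) :=
        wdist_triangle hπ₃ _ _ _
    _ ≤ K * N₁ + N₂ := Nat.add_le_add
        ((hK _ _).trans (Nat.mul_le_mul_left K (hN₁ x α hα β hβ hβα n)))
        (hN₂ (φ₁ x) β hβ γ hγ hγβ n)

theorem FTBRP.comp (hL₂ : ∀ g : G₂, ∃ w ∈ L₂, evalW π₂ w = g)
    (h₁ : FTBRP π₁ π₂ φ₁ L₁ L₂) (h₂ : FTBRP π₂ π₃ φ₂ L₂ L₃) :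
    FTBRP π₁ π₃ (φ₂.comp φ₁) L₁ L₃ := by
  intro p
  obtain ⟨q, hq⟩ := h₁ p
  obtain ⟨r, hr⟩ := h₂ q
  refine ⟨r, fun u₁ hu₁ u₂ hu₂ u₃ hu₃ w₁ hw₁ w₂ hw₂ w₃ hw₃ he₁ he₂ he₃ hmft => ?_⟩
  obtain ⟨v₁, hv₁, hv₁e⟩ := hL₂ (φ₁ (evalW π₁ u₁))
  obtain ⟨v₂, hv₂, hv₂e⟩ := hL₂ (φ₁ (evalW π₁ u₂))
  obtain ⟨v₃, hv₃, hv₃e⟩ := hL₂ (φ₁ (evalW π₁ u₃))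
  exact hr v₁ hv₁ v₂ hv₂ v₃ hv₃ w₁ hw₁ w₂ hw₂ w₃ hw₃ (hv₁e ▸ he₁) (hv₂e ▸ he₂) (hv₃e ▸ he₃)
    (hq u₁ hu₁ u₂ hu₂ u₃ hu₃ v₁ hv₁ v₂ hv₂ v₃ hv₃ hv₁e hv₂e hv₃e hmft)

end Composition

end Auto

theorem brp_comp_general {A₁ A₂ A₃ G₁ G₂ G₃ : Type*} [Fintype A₂]
    [Group G₁] [Group G₂] [Group G₃]
    (π₁ : FreeMonoid A₁ →* G₁)
    (π₂ : FreeMonoid A₂ →* G₂)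
    (π₃ : FreeMonoid A₃ →* G₃) (hπ₃ : Function.Surjective π₃)
    (L₁ : Language A₁) (L₂ : Language A₂) (L₃ : Language A₃)
    (h₂ : IsAutomaticStructure π₂ L₂)
    (φ₁ : G₁ →* G₂) (φ₂ : G₂ →* G₃) :
    (BRP π₁ π₂ φ₁ L₁ L₂ → BRP π₂ π₃ φ₂ L₂ L₃ →
      BRP π₁ π₃ (φ₂.comp φ₁) L₁ L₃) ∧
    (SyncBRP π₁ π₂ φ₁ L₁ L₂ → SyncBRP π₂ π₃ φ₂ L₂ L₃ →
      SyncBRP π₁ π₃ (φ₂.comp φ₁) L₁ L₃) ∧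
    (FTBRP π₁ π₂ φ₁ L₁ L₂ → FTBRP π₂ π₃ φ₂ L₂ L₃ →
      FTBRP π₁ π₃ (φ₂.comp φ₁) L₁ L₃) :=
  ⟨BRP.comp hπ₃ h₂.onto, SyncBRP.comp hπ₃ h₂.onto, FTBRP.comp h₂.onto⟩

/-- The BRP, the synchronous BRP and the FT-BRP are preserved under
composition of homomorphisms. -/
theorem brp_comp {A₁ A₂ A₃ G₁ G₂ G₃ : Type*} [Fintype A₁] [Fintype A₂] [Fintype A₃]
    [Group G₁] [Group G₂] [Group G₃]
    (π₁ : FreeMonoid A₁ →* G₁) (hπ₁ : Function.Surjective π₁)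
    (π₂ : FreeMonoid A₂ →* G₂) (hπ₂ : Function.Surjective π₂)
    (π₃ : FreeMonoid A₃ →* G₃) (hπ₃ : Function.Surjective π₃)
    (L₁ : Language A₁) (L₂ : Language A₂) (L₃ : Language A₃)
    (h₁ : IsAutomaticStructure π₁ L₁) (h₂ : IsAutomaticStructure π₂ L₂)
    (h₃ : IsAutomaticStructure π₃ L₃)
    (φ₁ : G₁ →* G₂) (φ₂ : G₂ →* G₃) :
    (BRP π₁ π₂ φ₁ L₁ L₂ → BRP π₂ π₃ φ₂ L₂ L₃ →
      BRP π₁ π₃ (φ₂.comp φ₁) L₁ L₃) ∧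
    (SyncBRP π₁ π₂ φ₁ L₁ L₂ → SyncBRP π₂ π₃ φ₂ L₂ L₃ →
      SyncBRP π₁ π₃ (φ₂.comp φ₁) L₁ L₃) ∧
    (FTBRP π₁ π₂ φ₁ L₁ L₂ → FTBRP π₂ π₃ φ₂ L₂ L₃ →
      FTBRP π₁ π₃ (φ₂.comp φ₁) L₁ L₃) :=
  brp_comp_general π₁ π₂ π₃ hπ₃ L₁ L₂ L₃ h₂ φ₁ φ₂
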